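/- Tr(ρ_λ · σ^z) = −(ε/μ)·tanh(βμ). In particular, if λ ≠ 0 satisfies the gap equation tanh(βμ) = 2μ, then Tr(ρ_λ · σ^z) = −2ε. -/

import Mathlib

open Matrix

/-- Matrix exponential on 2×2 complex matrices. -/
noncomputable def mexp (A : Matrix (Fin 2) (Fin 2) ℂ) : Matrix (Fin 2) (Fin 2) ℂ :=
  NormedSpace.exp A

/-- Pauli matrix σ^z. -/
def σz : Matrix (Fin 2) (Fin 2) ℂ := !![1, 0; 0, -1]
/-- Pauli matrix σ^+. -/
def σp : Matrix (Fin 2) (Fin 2) ℂ := !![0, 1; 0, 0]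
/-- Pauli matrix σ^-. -/
def σm : Matrix (Fin 2) (Fin 2) ℂ := !![0, 0; 1, 0]

/-- μ = √(ε² + |λ|²). -/
noncomputable def μBCS (ε : ℝ) (l : ℂ) : ℝ := Real.sqrt (ε ^ 2 + ‖l‖ ^ 2)

/-- One-site effective Hamiltonian h_λ = ε·σ^z − λ·σ^+ − (conj λ)·σ^-. -/
noncomputable def hBCS (ε : ℝ) (l : ℂ) : Matrix (Fin 2) (Fin 2) ℂ :=
  (ε : ℂ) • σz - l • σp - (starRingEnd ℂ l) • σm

/-- One-site Gibbs density matrix ρ_λ = exp(−β h_λ)/Tr exp(−β h_λ). -/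
noncomputable def ρBCS (ε β : ℝ) (l : ℂ) : Matrix (Fin 2) (Fin 2) ℂ :=
  (Matrix.trace (mexp (-(β : ℂ) • hBCS ε l)))⁻¹ • mexp (-(β : ℂ) • hBCS ε l)

/-- Spectral projection P₊ = (1/2)(1 + h_λ/μ). -/
noncomputable def Pplus (ε : ℝ) (l : ℂ) : Matrix (Fin 2) (Fin 2) ℂ :=
  (1 / 2 : ℂ) • (1 + (μBCS ε l : ℂ)⁻¹ • hBCS ε l)

/-- Spectral projection P₋ = (1/2)(1 − h_λ/μ). -/
noncomputable def Pminus (ε : ℝ) (l : ℂ) : Matrix (Fin 2) (Fin 2) ℂ :=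
  (1 / 2 : ℂ) • (1 - (μBCS ε l : ℂ)⁻¹ • hBCS ε l)

/-- E₋(A) = P₋·A·P₊. -/
noncomputable def Eminus (ε : ℝ) (l : ℂ) (A : Matrix (Fin 2) (Fin 2) ℂ) :
    Matrix (Fin 2) (Fin 2) ℂ := Pminus ε l * A * Pplus ε l

/-- E₀(A) = P₋·A·P₋ + P₊·A·P₊. -/
noncomputable def Ezero (ε : ℝ) (l : ℂ) (A : Matrix (Fin 2) (Fin 2) ℂ) :
    Matrix (Fin 2) (Fin 2) ℂ := Pminus ε l * A * Pminus ε l + Pplus ε l * A * Pplus ε l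

/-- E₊(A) = P₊·A·P₋. -/
noncomputable def Eplus (ε : ℝ) (l : ℂ) (A : Matrix (Fin 2) (Fin 2) ℂ) :
    Matrix (Fin 2) (Fin 2) ℂ := Pplus ε l * A * Pminus ε l

/-- The complex structure map J(A) = i·(E₊(A) − E₋(A)). -/
noncomputable def Jmap (ε : ℝ) (l : ℂ) (A : Matrix (Fin 2) (Fin 2) ℂ) :
    Matrix (Fin 2) (Fin 2) ℂ := Complex.I • (Eplus ε l A - Eminus ε l A)

/-- Reduced symmetry generator σ̂^z = (E₊ + E₋)(σ^z). -/
noncomputable def σhat (ε : ℝ) (l : ℂ) : Matrix (Fin 2) (Fin 2) ℂ :=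
  Eplus ε l σz + Eminus ε l σz

/-- Canonical order parameter Jσ̂^z = i·(E₊ − E₋)(σ^z). -/
noncomputable def Jσhat (ε : ℝ) (l : ℂ) : Matrix (Fin 2) (Fin 2) ℂ :=
  Jmap ε l σz

/-! Since `h_λ ^ 2 = μ ^ 2 • 1`, the matrix `h_λ / μ` is an involution, so the exponential series
splits into its even and odd parts: `exp (-β h_λ) = cosh (β μ) • 1 - sinh (β μ) • (h_λ / μ)`.
Taking traces with `Tr h_λ = Tr σᶻ = 0` and `Tr (h_λ σᶻ) = 2 ε` gives
`Tr (ρ_λ σᶻ) = -(2 ε / μ) sinh (β μ) / (2 cosh (β μ))`. -/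

open NormedSpace in
theorem exp_smul_of_sq_eq_one {𝔸 : Type*} [Ring 𝔸] [Algebra ℂ 𝔸] [TopologicalSpace 𝔸]
    [IsTopologicalRing 𝔸] [ContinuousSMul ℂ 𝔸] [T2Space 𝔸] {b : 𝔸} (hb : b ^ 2 = 1) (z : ℂ) :
    exp (z • b) = Complex.cosh z • 1 + Complex.sinh z • b := by
  rw [exp_eq_tsum ℂ]
  refine HasSum.tsum_eq (HasSum.even_add_odd ?_ ?_)
  · convert (Complex.hasSum_cosh z).smul_const (1 : 𝔸) using 2 with n
    rw [smul_pow, pow_mul b, hb, one_pow, smul_smul, inv_mul_eq_div]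
  · convert (Complex.hasSum_sinh z).smul_const b using 2 with n
    rw [smul_pow, pow_succ b, pow_mul b, hb, one_pow, one_mul, smul_smul, inv_mul_eq_div]

lemma μBCS_sq (ε : ℝ) (l : ℂ) : μBCS ε l ^ 2 = ε ^ 2 + ‖l‖ ^ 2 :=
  Real.sq_sqrt (by positivity)

lemma μBCS_pos {ε : ℝ} (hε : ε ≠ 0) (l : ℂ) : 0 < μBCS ε l :=
  Real.sqrt_pos.mpr (by positivity)

lemma hBCS_eq (ε : ℝ) (l : ℂ) : hBCS ε l = !![(ε : ℂ), -l; -starRingEnd ℂ l, -ε] := by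
  ext i j; fin_cases i <;> fin_cases j <;> simp [hBCS, σz, σp, σm]

lemma hBCS_sq (ε : ℝ) (l : ℂ) : hBCS ε l ^ 2 = ((μBCS ε l : ℂ) ^ 2) • 1 := by
  have hμ : (μBCS ε l : ℂ) ^ 2 = ε ^ 2 + l * starRingEnd ℂ l := by
    rw [Complex.mul_conj', ← Complex.ofReal_pow, μBCS_sq]; push_cast; ring
  rw [hBCS_eq, sq, mul_fin_two, hμ]
  ext i j; fin_cases i <;> fin_cases j <;> simp <;> ring

lemma trace_hBCS (ε : ℝ) (l : ℂ) : trace (hBCS ε l) = 0 := by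
  simp [hBCS_eq, trace_fin_two]

lemma trace_hBCS_mul_σz (ε : ℝ) (l : ℂ) : trace (hBCS ε l * σz) = 2 * ε := by
  simp [hBCS_eq, σz, trace_fin_two]; ring

lemma trace_σz : trace σz = 0 := by
  simp [σz, trace_fin_two]

section GibbsState

variable {ε : ℝ} {l : ℂ}

lemma mexp_neg_smul_hBCS (hμ : μBCS ε l ≠ 0) (β : ℝ) :
    mexp (-(β : ℂ) • hBCS ε l) = Complex.cosh (β * μBCS ε l) • 1 -
      Complex.sinh (β * μBCS ε l) • ((μBCS ε l : ℂ)⁻¹ • hBCS ε l) := by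
  have hμC : (μBCS ε l : ℂ) ≠ 0 := by exact_mod_cast hμ
  have hinv : ((μBCS ε l : ℂ)⁻¹ • hBCS ε l) ^ 2 = 1 := by
    rw [smul_pow, hBCS_sq, smul_smul, inv_pow, inv_mul_cancel₀ (pow_ne_zero 2 hμC), one_smul]
  have hscale : -(β : ℂ) • hBCS ε l = (-(β * μBCS ε l : ℂ)) • ((μBCS ε l : ℂ)⁻¹ • hBCS ε l) := by
    rw [smul_smul]; congr 1; field_simp
  rw [mexp, hscale, exp_smul_of_sq_eq_one hinv, Complex.cosh_neg, Complex.sinh_neg, neg_smul,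
    ← sub_eq_add_neg]

lemma trace_mexp_neg_smul_hBCS (hμ : μBCS ε l ≠ 0) (β : ℝ) :
    trace (mexp (-(β : ℂ) • hBCS ε l)) = 2 * Complex.cosh (β * μBCS ε l) := by
  rw [mexp_neg_smul_hBCS hμ, trace_sub, trace_smul, trace_smul, trace_smul, trace_one, trace_hBCS]
  simp [mul_comm]

lemma trace_mexp_neg_smul_hBCS_mul_σz (hμ : μBCS ε l ≠ 0) (β : ℝ) :
    trace (mexp (-(β : ℂ) • hBCS ε l) * σz) =
      -(2 * ε / μBCS ε l) * Complex.sinh (β * μBCS ε l) := by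
  rw [mexp_neg_smul_hBCS hμ, sub_mul, smul_mul_assoc, smul_mul_assoc, smul_mul_assoc, one_mul,
    trace_sub, trace_smul, trace_smul, trace_smul, trace_σz, trace_hBCS_mul_σz, smul_eq_mul,
    smul_eq_mul, smul_eq_mul]
  ring

lemma trace_ρBCS_mul_σz (hμ : μBCS ε l ≠ 0) (β : ℝ) :
    trace (ρBCS ε β l * σz) = (-(ε / μBCS ε l) * Real.tanh (β * μBCS ε l) : ℝ) := by
  have hcosh : Complex.cosh (β * μBCS ε l) ≠ 0 := by
    exact_mod_cast (Real.cosh_pos (β * μBCS ε l)).ne'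
  rw [ρBCS, smul_mul_assoc, trace_smul, trace_mexp_neg_smul_hBCS hμ,
    trace_mexp_neg_smul_hBCS_mul_σz hμ, smul_eq_mul]
  push_cast
  rw [Complex.tanh_eq_sinh_div_cosh]
  field_simp

end GibbsState

theorem bcs_sigma_z_expectation_general
    (ε β : ℝ) (hε : ε ∈ Set.Ioo (0 : ℝ) (1 / 2)) (l : ℂ) :
    Matrix.trace (ρBCS ε β l * σz) =
      (-(ε / μBCS ε l) * Real.tanh (β * μBCS ε l) : ℝ) ∧
    (l ≠ 0 → Real.tanh (β * μBCS ε l) = 2 * μBCS ε l →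
      Matrix.trace (ρBCS ε β l * σz) = (-(2 * ε) : ℝ)) := by
  have hμ : μBCS ε l ≠ 0 := (μBCS_pos hε.1.ne' l).ne'
  refine ⟨trace_ρBCS_mul_σz hμ β, fun _ hgap => ?_⟩
  rw [trace_ρBCS_mul_σz hμ β, hgap]
  congr 1
  field_simp

/-- Tr(ρ_λ·σ^z) = −(ε/μ)·tanh(βμ); if λ ≠ 0 satisfies the gap equation
tanh(βμ) = 2μ then Tr(ρ_λ·σ^z) = −2ε. -/
theorem bcs_sigma_z_expectation
    (ε β : ℝ) (hε : ε ∈ Set.Ioo (0 : ℝ) (1 / 2)) (hβ : 0 < β) (l : ℂ) :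
    Matrix.trace (ρBCS ε β l * σz) =
      (-(ε / μBCS ε l) * Real.tanh (β * μBCS ε l) : ℝ) ∧
    (l ≠ 0 → Real.tanh (β * μBCS ε l) = 2 * μBCS ε l →
      Matrix.trace (ρBCS ε β l * σz) = (-(2 * ε) : ℝ)) :=
  bcs_sigma_z_expectation_general ε β hε l
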